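/- arXiv:2111.08329 — 6 statements merged into one kernel-verified Lean document; each statement's English description precedes it below -/
import Mathlib

section
/- The function B₁(γ) = (2/π)·(γ²/(√γ − 1))·((√γ − 2)·sin(π/√γ))/((γ − 1)(2√γ − 1)) is strictly increasing on the interval [4, 9). -/
/-!
Writing γ = s², one has B₁(s²) = (2/π) · r(s) · s sin(π/s) with
r(s) = s³(s - 2) / ((s - 1)²(s + 1)(2s - 1)). For s ≥ 2 both factors are nonnegative and strictly
increasing: s sin(π/s) because sin x / x decreases on (0, π), that is x cos x < sin x there, and
r because its derivative has the numerator s²(s³ - s² + 10s - 6) > 0. So B₁ even increases on all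
of [4, ∞).
-/

open Real Set

theorem Real.mul_cos_lt_sin {x : ℝ} (hx₀ : 0 < x) (hxπ : x < π) : x * cos x < sin x := by
  rcases lt_or_ge x (π / 2) with hx | hx
  · have hcos : 0 < cos x := cos_pos_of_mem_Ioo ⟨by linarith, hx⟩
    have := lt_tan hx₀ hx
    rwa [tan_eq_sin_div_cos, lt_div_iff₀ hcos] at this
  · have hcos : cos x ≤ 0 := cos_nonpos_of_pi_div_two_le_of_le hx (by linarith)
    nlinarith [sin_pos_of_pos_of_lt_pi hx₀ hxπ]

theorem hasDerivAt_mul_sin_pi_div {s : ℝ} (hs : s ≠ 0) :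
    HasDerivAt (fun s => s * sin (π / s)) (sin (π / s) - π / s * cos (π / s)) s := by
  have hinv : HasDerivAt (fun s => π / s) (-(π / s ^ 2)) s := by
    simpa [div_eq_mul_inv] using (hasDerivAt_inv hs).const_mul π
  refine ((hasDerivAt_id' s).mul ((hasDerivAt_sin (π / s)).comp s hinv)).congr_deriv ?_
  simp only [Function.comp_apply]
  field_simp
  ring

theorem strictMonoOn_mul_sin_pi_div : StrictMonoOn (fun s => s * sin (π / s)) (Ici 1) := by
  have hderiv {s : ℝ} (hs : 1 ≤ s) := hasDerivAt_mul_sin_pi_div (s := s) (by linarith)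
  refine strictMonoOn_of_hasDerivWithinAt_pos (convex_Ici 1)
    (fun s hs => (hderiv hs).continuousAt.continuousWithinAt)
    (fun s hs => (hderiv (interior_subset hs)).hasDerivWithinAt) fun s hs => ?_
  rw [interior_Ici, mem_Ioi] at hs
  exact sub_pos.2 (mul_cos_lt_sin (div_pos pi_pos (zero_lt_one.trans hs)) (div_lt_self pi_pos hs))

theorem mul_sin_pi_div_nonneg {s : ℝ} (hs : 1 ≤ s) : 0 ≤ s * sin (π / s) :=
  mul_nonneg (by linarith) (sin_nonneg_of_nonneg_of_le_pi (by positivity)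
    (div_le_self pi_pos.le hs))

noncomputable def B₁RationalFactor (s : ℝ) : ℝ :=
  s ^ 3 * (s - 2) / ((s - 1) ^ 2 * (s + 1) * (2 * s - 1))

theorem hasDerivAt_B₁RationalFactor {s : ℝ} (hs : 1 < s) :
    HasDerivAt B₁RationalFactor
      (s ^ 2 * (s ^ 3 - s ^ 2 + 10 * s - 6) / ((s - 1) ^ 3 * (s + 1) ^ 2 * (2 * s - 1) ^ 2)) s := by
  have hnum : HasDerivAt (fun s : ℝ => s ^ 3 * (s - 2)) (4 * s ^ 3 - 6 * s ^ 2) s := by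
    refine ((hasDerivAt_pow 3 s).fun_mul ((hasDerivAt_id' s).sub_const 2)).congr_deriv ?_
    push_cast; ring
  have hden : HasDerivAt (fun s : ℝ => (s - 1) ^ 2 * (s + 1) * (2 * s - 1))
      ((s - 1) * (8 * s ^ 2 - s - 3)) s := by
    refine ((((hasDerivAt_id' s).sub_const 1).fun_pow 2).fun_mul ((hasDerivAt_id' s).add_const 1)
      |>.fun_mul (((hasDerivAt_id' s).const_mul 2).sub_const 1)).congr_deriv ?_
    push_cast; ring
  have hs₁ : s - 1 ≠ 0 := by linarith
  have hs₂ : s + 1 ≠ 0 := by linarith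
  have hs₃ : 2 * s - 1 ≠ 0 := by linarith
  refine (hnum.div hden (by positivity)).congr_deriv ?_
  field_simp
  ring

theorem strictMonoOn_B₁RationalFactor : StrictMonoOn B₁RationalFactor (Ioi 1) := by
  refine strictMonoOn_of_hasDerivWithinAt_pos (convex_Ioi 1)
    (fun s hs => (hasDerivAt_B₁RationalFactor hs).continuousAt.continuousWithinAt)
    (fun s hs => (hasDerivAt_B₁RationalFactor (interior_subset hs)).hasDerivWithinAt)
    fun s hs => ?_
  rw [interior_Ioi, mem_Ioi] at hs
  have hs₁ : 0 < s - 1 := by linarith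
  have hcubic : 0 < s ^ 3 - s ^ 2 + 10 * s - 6 := by nlinarith
  bound

theorem B₁RationalFactor_nonneg {s : ℝ} (hs : 2 ≤ s) : 0 ≤ B₁RationalFactor s := by
  have hs₂ : 0 ≤ s - 2 := by linarith
  have hs₁ : 0 ≤ 2 * s - 1 := by linarith
  unfold B₁RationalFactor
  positivity

noncomputable def B₁ (γ : ℝ) : ℝ :=
  (2 / π) * (γ ^ 2 / (Real.sqrt γ - 1)) * ((Real.sqrt γ - 2) * Real.sin (π / Real.sqrt γ)) /
    ((γ - 1) * (2 * Real.sqrt γ - 1))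

theorem B₁_sq {s : ℝ} (hs : 1 < s) :
    B₁ (s ^ 2) = 2 / π * (B₁RationalFactor s * (s * sin (π / s))) := by
  have hs₁ : s - 1 ≠ 0 := by linarith
  have hs₂ : s + 1 ≠ 0 := by linarith
  have hs₃ : 2 * s - 1 ≠ 0 := by linarith
  rw [B₁, B₁RationalFactor, sqrt_sq (by linarith),
    show s ^ 2 - 1 = (s - 1) * (s + 1) by ring]
  field_simp

theorem strictMonoOn_B₁ : StrictMonoOn B₁ (Ici 4) := by
  intro γ hγ δ hδ hγδ
  have hγ₀ : 0 ≤ γ := by linarith [mem_Ici.1 hγ]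
  have hs : 2 ≤ √γ := (le_sqrt' two_pos).2 (by linarith [mem_Ici.1 hγ])
  have hst : √γ < √δ := sqrt_lt_sqrt hγ₀ hγδ
  rw [← sq_sqrt hγ₀, ← sq_sqrt (hγ₀.trans hγδ.le), B₁_sq (by linarith), B₁_sq (by linarith)]
  refine mul_lt_mul_of_pos_left (mul_lt_mul'' ?_ ?_ (B₁RationalFactor_nonneg hs)
    (mul_sin_pi_div_nonneg (by linarith))) (by positivity)
  · exact strictMonoOn_B₁RationalFactor (mem_Ioi.2 (by linarith)) (mem_Ioi.2 (by linarith)) hst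
  · exact strictMonoOn_mul_sin_pi_div (mem_Ici.2 (by linarith)) (mem_Ici.2 (by linarith)) hst

theorem stmt9 :
    StrictMonoOn (fun γ : ℝ =>
      (2 / π) * (γ ^ 2 / (Real.sqrt γ - 1)) *
        ((Real.sqrt γ - 2) * Real.sin (π / Real.sqrt γ)) /
        ((γ - 1) * (2 * Real.sqrt γ - 1)))
      (Set.Ico (4 : ℝ) 9) :=
  strictMonoOn_B₁.mono Ico_subset_Ici_self
end

section
/- The function B₂(γ) = ((3 + π²)γ + (9 − 2π²)√γ − 6)(√γ − 2) / (3(√γ − 1)(√γ + 2)(3√γ − 2)) is strictly increasing on the interval [4, 9). -/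
set_option maxHeartbeats 1000000


open Real

theorem stmt10 :
    StrictMonoOn (fun γ : ℝ =>
      ((3 + π ^ 2) * γ + (9 - 2 * π ^ 2) * Real.sqrt γ - 6) * (Real.sqrt γ - 2) /
        (3 * (Real.sqrt γ - 1) * (Real.sqrt γ + 2) * (3 * Real.sqrt γ - 2)))
      (Set.Ico (4 : ℝ) 9) := by
  intro a ha b hb hab
  obtain ⟨ha4, ha9⟩ := ha
  obtain ⟨hb4, hb9⟩ := hb
  have ha0 : (0:ℝ) ≤ a := by linarith
  have hb0 : (0:ℝ) ≤ b := by linarith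
  set s := Real.sqrt a with hs
  set t := Real.sqrt b with ht
  have hs2 : s ^ 2 = a := Real.sq_sqrt ha0
  have ht2 : t ^ 2 = b := Real.sq_sqrt hb0
  have hs_lb : 2 ≤ s := by
    have := Real.sqrt_le_sqrt ha4
    simpa [show Real.sqrt 4 = 2 by
      rw [show (4:ℝ) = 2^2 by norm_num, Real.sqrt_sq (by norm_num)]] using this
  have ht_ub : t < 3 := by
    have := Real.sqrt_lt_sqrt hb0 hb9
    simpa [show Real.sqrt 9 = 3 by
      rw [show (9:ℝ) = 3^2 by norm_num, Real.sqrt_sq (by norm_num)]] using this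
  have hst : s < t := Real.sqrt_lt_sqrt ha0 hab
  have hs_ub : s < 3 := lt_trans hst ht_ub
  have ht_lb : 2 ≤ t := le_of_lt (lt_of_le_of_lt hs_lb hst)
  have hp : (9:ℝ) ≤ π ^ 2 := by
    nlinarith [Real.pi_gt_three]
  have hDs : 0 < 3 * (s - 1) * (s + 2) * (3 * s - 2) := by nlinarith
  have hDt : 0 < 3 * (t - 1) * (t + 2) * (3 * t - 2) := by nlinarith
  simp only
  rw [div_lt_div_iff₀ hDs hDt, ← hs2, ← ht2,
    Real.sqrt_sq (by linarith : (0:ℝ) ≤ s), Real.sqrt_sq (by linarith : (0:ℝ) ≤ t)]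
  have hA : 0 ≤ 48 - 48*t - 48*s + 96*s*t + 12*t^2 - 60*s*t^2 + 12*s^2 - 60*s^2*t + 39*s^2*t^2 := by
    nlinarith [mul_nonneg (sub_nonneg.2 hs_lb) (sub_nonneg.2 ht_lb), sq_nonneg (s*t - 2*s - 2*t + 4),
      mul_nonneg (mul_nonneg (sub_nonneg.2 hs_lb) (sub_nonneg.2 ht_lb)) (sub_nonneg.2 hs_lb),
      mul_nonneg (mul_nonneg (sub_nonneg.2 hs_lb) (sub_nonneg.2 ht_lb)) (sub_nonneg.2 ht_lb),
      mul_nonneg (mul_nonneg (mul_nonneg (sub_nonneg.2 hs_lb) (sub_nonneg.2 ht_lb)) (sub_nonneg.2 hs_lb)) (sub_nonneg.2 ht_lb)]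
  have hB : 0 < -72*t^2 - 72*s*t + 144*s*t^2 - 72*s^2 + 144*s^2*t - 18*s^2*t^2 := by
    nlinarith [mul_pos (sub_pos.2 hs_ub) (sub_pos.2 ht_ub),
      mul_nonneg (sub_nonneg.2 hs_lb) (sub_nonneg.2 ht_lb),
      mul_nonneg (mul_nonneg (sub_nonneg.2 hs_lb) (sub_nonneg.2 ht_lb)) (le_of_lt (sub_pos.2 ht_ub)),
      mul_nonneg (mul_nonneg (sub_nonneg.2 hs_lb) (le_of_lt (sub_pos.2 ht_ub))) (le_of_lt (sub_pos.2 hs_ub)),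
      mul_nonneg (mul_nonneg (sub_nonneg.2 ht_lb) (le_of_lt (sub_pos.2 ht_ub))) (le_of_lt (sub_pos.2 hs_ub))]
  have hQ : 0 < π^2 * (48 - 48*t - 48*s + 96*s*t + 12*t^2 - 60*s*t^2 + 12*s^2 - 60*s^2*t + 39*s^2*t^2)
      + (-72*t^2 - 72*s*t + 144*s*t^2 - 72*s^2 + 144*s^2*t - 18*s^2*t^2) := by
    have hpA : 0 ≤ π^2 * (48 - 48*t - 48*s + 96*s*t + 12*t^2 - 60*s*t^2 + 12*s^2 - 60*s^2*t + 39*s^2*t^2) :=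
      mul_nonneg (by positivity) hA
    linarith
  linarith [mul_pos (sub_pos.2 hst) hQ]
end

section
/- The function B₃(γ) = (2/π)·(γ²/(√γ − 1))·((√γ − 2)·(−sin(3π/√γ)))/((9 − γ)(2√γ − 3)(4√γ − 3)) is strictly increasing on the interval [4, 9). -/
open Real

noncomputable def auxA (s : ℝ) : ℝ := (s^3 - 2*s^2) / (8*s^3 - 26*s^2 + 27*s - 9)

lemma auxD_pos {s : ℝ} (h2 : 2 ≤ s) (h3 : s < 3) : (0:ℝ) < 8*s^3 - 26*s^2 + 27*s - 9 := by
  nlinarith [sq_nonneg (s-2), sq_nonneg s, mul_nonneg (sub_nonneg.2 h2) (sub_nonneg.2 h2)]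

set_option maxHeartbeats 1000000 in
lemma auxA_mono : StrictMonoOn auxA (Set.Ico (2:ℝ) 3) := by
  apply strictMonoOn_of_deriv_pos (convex_Ico 2 3)
  · apply ContinuousOn.div
    · fun_prop
    · fun_prop
    · intro s hs
      exact ne_of_gt (auxD_pos hs.1 hs.2)
  · intro s hs
    rw [interior_Ico] at hs
    obtain ⟨h2, h3⟩ := hs
    have hD : (0:ℝ) < 8*s^3 - 26*s^2 + 27*s - 9 := auxD_pos h2.le h3
    have hN : HasDerivAt (fun s : ℝ => s^3 - 2*s^2) (3*s^2 - 4*s) s := by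
      have := ((hasDerivAt_pow 3 s).sub ((hasDerivAt_pow 2 s).const_mul 2))
      exact this.congr_deriv (by push_cast; ring)
    have hDd : HasDerivAt (fun s : ℝ => 8*s^3 - 26*s^2 + 27*s - 9)
        (24*s^2 - 52*s + 27) s := by
      have := ((((hasDerivAt_pow 3 s).const_mul 8).sub ((hasDerivAt_pow 2 s).const_mul 26)).add
        ((hasDerivAt_id s).const_mul 27)).sub_const 9
      exact this.congr_deriv (by push_cast; ring)
    have hA : HasDerivAt auxA
        (((3*s^2 - 4*s) * (8*s^3 - 26*s^2 + 27*s - 9) - (s^3 - 2*s^2) * (24*s^2 - 52*s + 27))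
          / (8*s^3 - 26*s^2 + 27*s - 9)^2) s := hN.div hDd hD.ne'
    rw [hA.deriv]
    apply div_pos
    · nlinarith [mul_pos (sub_pos.2 h2) (sub_pos.2 h3), sq_nonneg (s-2), sq_nonneg (3-s)]
    · positivity


noncomputable def auxB (s : ℝ) : ℝ := s^2 * Real.sin (3 * π / s - π) / (9 - s^2)

lemma xcos_lt_sin {x : ℝ} (hx0 : 0 < x) (hx2 : x < π/2) : x * Real.cos x < Real.sin x := by
  have hcos : 0 < Real.cos x := Real.cos_pos_of_mem_Ioo ⟨by linarith [Real.pi_pos], hx2⟩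
  have ht := Real.lt_tan hx0 hx2
  rw [Real.tan_eq_sin_div_cos] at ht
  calc x * Real.cos x < (Real.sin x / Real.cos x) * Real.cos x :=
        mul_lt_mul_of_pos_right ht hcos
    _ = Real.sin x := by field_simp

set_option maxHeartbeats 1000000 in
lemma auxB_mono : StrictMonoOn auxB (Set.Ico (2:ℝ) 3) := by
  apply strictMonoOn_of_deriv_pos (convex_Ico 2 3)
  · apply ContinuousOn.div
    · apply ContinuousOn.mul (by fun_prop)
      apply Real.continuous_sin.comp_continuousOn
      apply ContinuousOn.sub _ continuousOn_const
      apply ContinuousOn.div continuousOn_const continuousOn_id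
      intro s hs
      simp only [id_eq]
      intro h; rw [h] at hs; exact absurd hs.1 (by norm_num)
    · fun_prop
    · intro s hs
      have h2 := hs.1; have h3 := hs.2
      intro h; nlinarith
  · intro s hs
    rw [interior_Ico] at hs
    obtain ⟨h2, h3⟩ := hs
    have hs0 : (0:ℝ) < s := by linarith
    have h9 : (0:ℝ) < 9 - s^2 := by nlinarith
    have hπ := Real.pi_pos
    have hx0 : 0 < 3 * π / s - π := by
      rw [sub_pos, lt_div_iff₀ hs0]; nlinarith
    have hx2 : 3 * π / s - π < π / 2 := by
      rw [sub_lt_iff_lt_add, div_lt_iff₀ hs0]; nlinarith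
    have hcos : 0 < Real.cos (3 * π / s - π) :=
      Real.cos_pos_of_mem_Ioo ⟨by linarith, hx2⟩
    have hsin := xcos_lt_sin hx0 hx2
    have hinner : HasDerivAt (fun s : ℝ => 3 * π / s - π) (-(3*π) / s^2) s := by
      have := ((hasDerivAt_const s (3*π)).div (hasDerivAt_id s) hs0.ne').sub_const π
      exact this.congr_deriv (by simp only [id]; ring)
    have hsinD : HasDerivAt (fun s : ℝ => Real.sin (3 * π / s - π))
        (Real.cos (3 * π / s - π) * (-(3*π) / s^2)) s :=
      (Real.hasDerivAt_sin _).comp s hinner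
    have hu : HasDerivAt (fun s : ℝ => s^2 * Real.sin (3 * π / s - π))
        (2*s * Real.sin (3 * π / s - π)
          + s^2 * (Real.cos (3 * π / s - π) * (-(3*π) / s^2))) s := by
      have := ((hasDerivAt_pow 2 s).mul hsinD)
      exact this.congr_deriv (by push_cast; ring)
    have hv : HasDerivAt (fun s : ℝ => 9 - s^2) (-(2*s)) s := by
      exact ((hasDerivAt_const s (9:ℝ)).sub (hasDerivAt_pow 2 s)).congr_deriv (by push_cast; ring)
    have hB : HasDerivAt auxB
        (((2*s * Real.sin (3 * π / s - π)
            + s^2 * (Real.cos (3 * π / s - π) * (-(3*π) / s^2))) * (9 - s^2)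
          - s^2 * Real.sin (3 * π / s - π) * (-(2*s))) / (9 - s^2)^2) s := hu.div hv h9.ne'
    rw [hB.deriv]
    apply div_pos
    · have hkey : s^2 * (Real.cos (3 * π / s - π) * (-(3*π) / s^2))
          = -(3*π) * Real.cos (3 * π / s - π) := by
        field_simp
      rw [hkey]
      have hsx : π * (3 - s) = s * (3 * π / s - π) := by
        field_simp
      have h9' : π * (9 - s^2) = s * (3 * π / s - π) * (3 + s) := by
        have h : π * (9 - s^2) = (π * (3 - s)) * (3 + s) := by ring
        rw [h, hsx]
      have h1 : (3 * π / s - π) * (3 + s) * Real.cos (3 * π / s - π)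
          < 6 * Real.sin (3 * π / s - π) := by
        have hlt : (3 * π / s - π) * (3 + s) < (3 * π / s - π) * 6 := by nlinarith
        calc (3 * π / s - π) * (3 + s) * Real.cos (3 * π / s - π)
            < (3 * π / s - π) * 6 * Real.cos (3 * π / s - π) :=
              mul_lt_mul_of_pos_right hlt hcos
          _ = 6 * ((3 * π / s - π) * Real.cos (3 * π / s - π)) := by ring
          _ < 6 * Real.sin (3 * π / s - π) := by linarith
      have heq : (2*s * Real.sin (3 * π / s - π)
            + -(3*π) * Real.cos (3 * π / s - π)) * (9 - s^2)
          - s^2 * Real.sin (3 * π / s - π) * (-(2*s))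
          = 3*s*(6 * Real.sin (3 * π / s - π)
            - (3 * π / s - π) * (3 + s) * Real.cos (3 * π / s - π)) := by
        linear_combination (-3 * Real.cos (3 * π / s - π)) * h9'
      rw [heq]
      apply mul_pos (by linarith)
      linarith
    · positivity

lemma sqrt_mem_Ico {z : ℝ} (hz : z ∈ Set.Ico (4:ℝ) 9) :
    Real.sqrt z ∈ Set.Ico (2:ℝ) 3 := by
  obtain ⟨hz4, hz9⟩ := hz
  constructor
  · rw [show (2:ℝ) = Real.sqrt 4 by
      rw [show (4:ℝ) = 2^2 by norm_num, Real.sqrt_sq (by norm_num)]]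
    exact Real.sqrt_le_sqrt hz4
  · exact (Real.sqrt_lt' (by norm_num)).2 (by norm_num; linarith)

theorem stmt11 :
    StrictMonoOn (fun γ : ℝ =>
      (2 / π) * (γ ^ 2 / (Real.sqrt γ - 1)) *
        ((Real.sqrt γ - 2) * (-Real.sin (3 * π / Real.sqrt γ))) /
        ((9 - γ) * (2 * Real.sqrt γ - 3) * (4 * Real.sqrt γ - 3)))
      (Set.Ico (4 : ℝ) 9) := by
  have hπ := Real.pi_pos
  have key : ∀ z ∈ Set.Ico (4:ℝ) 9,
      (2 / π) * (z ^ 2 / (Real.sqrt z - 1)) *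
        ((Real.sqrt z - 2) * (-Real.sin (3 * π / Real.sqrt z))) /
        ((9 - z) * (2 * Real.sqrt z - 3) * (4 * Real.sqrt z - 3))
      = (2 / π) * (auxA (Real.sqrt z) * auxB (Real.sqrt z)) := by
    intro z hz
    obtain ⟨hs2, hs3⟩ := sqrt_mem_Ico hz
    set s := Real.sqrt z with hsdef
    have hz0 : (0:ℝ) ≤ z := by linarith [hz.1]
    have hsq : s^2 = z := Real.sq_sqrt hz0
    have h1 : s - 1 ≠ 0 := by intro h; nlinarith
    have h23 : 2*s - 3 ≠ 0 := by intro h; nlinarith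
    have h43 : 4*s - 3 ≠ 0 := by intro h; nlinarith
    have hD : (8*s^3 - 26*s^2 + 27*s - 9) ≠ 0 := ne_of_gt (auxD_pos hs2 hs3)
    have h9s : 9 - s^2 ≠ 0 := by intro h; nlinarith
    rw [auxA, auxB, ← Real.sin_sub_pi, ← hsq]
    generalize Real.sin (3 * π / s - π) = S
    rw [show (8*s^3 - 26*s^2 + 27*s - 9) = (s-1)*(2*s-3)*(4*s-3) by ring]
    field_simp
  intro x hx y hy hxy
  simp only
  rw [key x hx, key y hy]
  have hsx := sqrt_mem_Ico hx
  have hsy := sqrt_mem_Ico hy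
  have hst : Real.sqrt x < Real.sqrt y :=
    Real.sqrt_lt_sqrt (by linarith [hx.1]) hxy
  have hAlt := auxA_mono hsx hsy hst
  have hBlt := auxB_mono hsx hsy hst
  set s := Real.sqrt x
  set t := Real.sqrt y
  have hBs : 0 < auxB s := by
    obtain ⟨h2, h3⟩ := hsx
    have hs0 : (0:ℝ) < s := by linarith
    apply div_pos
    · apply mul_pos (by positivity)
      apply Real.sin_pos_of_pos_of_lt_pi
      · rw [sub_pos, lt_div_iff₀ hs0]; nlinarith
      · rw [sub_lt_iff_lt_add, div_lt_iff₀ hs0]; nlinarith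
    · nlinarith
  have hAs : 0 ≤ auxA s := by
    obtain ⟨h2, h3⟩ := hsx
    apply div_nonneg
    · nlinarith
    · exact (auxD_pos h2 h3).le
  have hAt : 0 < auxA t := lt_of_le_of_lt hAs hAlt
  have hlt : auxA s * auxB s < auxA t * auxB t :=
    calc auxA s * auxB s < auxA t * auxB s := mul_lt_mul_of_pos_right hAlt hBs
      _ < auxA t * auxB t := mul_lt_mul_of_pos_left hBlt hAt
  have h2π : 0 < 2 / π := by positivity
  exact mul_lt_mul_of_pos_left hlt h2π
end

section
/- For every integer k ≥ 4, the function B_k(γ) = (2/π)·(γ²/(√γ − 1))·(√γ − 2)/((k² − γ)((k − 1)√γ − k)((k + 1)√γ − k)) is strictly increasing on the interval [4, 9). -/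
set_option maxHeartbeats 1000000

open Real

theorem stmt12 (k : ℕ) (hk : 4 ≤ k) :
    StrictMonoOn (fun γ : ℝ =>
      (2 / π) * (γ ^ 2 / (Real.sqrt γ - 1)) * (Real.sqrt γ - 2) /
        (((k : ℝ) ^ 2 - γ) * (((k : ℝ) - 1) * Real.sqrt γ - k) *
          (((k : ℝ) + 1) * Real.sqrt γ - k)))
      (Set.Ico (4 : ℝ) 9) := by
  intro a ha b hb hab
  obtain ⟨ha4, ha9⟩ := ha
  obtain ⟨hb4, hb9⟩ := hb
  have hK : (4:ℝ) ≤ (k:ℝ) := by exact_mod_cast hk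
  set K : ℝ := (k:ℝ) with hKdef
  set s : ℝ := Real.sqrt a with hsdef
  set t : ℝ := Real.sqrt b with htdef
  have h4 : Real.sqrt 4 = 2 := by
    rw [show (4:ℝ) = 2^2 by norm_num, Real.sqrt_sq (by norm_num)]
  have hs2 : 2 ≤ s := by rw [← h4]; exact Real.sqrt_le_sqrt ha4
  have hst : s < t := Real.sqrt_lt_sqrt (by linarith) hab
  have ht3 : t < 3 := by
    rw [htdef, show (3:ℝ) = Real.sqrt 9 by
      rw [show (9:ℝ) = 3^2 by norm_num, Real.sqrt_sq (by norm_num)]]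
    exact Real.sqrt_lt_sqrt (by linarith) hb9
  have hsa : s ^ 2 = a := Real.sq_sqrt (by linarith)
  have htb : t ^ 2 = b := Real.sq_sqrt (by linarith)
  -- positivity facts
  have hpi : 0 < 2 / π := by positivity
  have d1s : 0 < s - 1 := by linarith
  have d1t : 0 < t - 1 := by linarith
  have d2s : 0 < (K + 1) * s - K := by nlinarith
  have d2t : 0 < (K + 1) * t - K := by nlinarith
  have d3s : 0 < K ^ 2 - s ^ 2 := by nlinarith
  have d3t : 0 < K ^ 2 - t ^ 2 := by nlinarith
  have d4s : 0 < (K - 1) * s - K := by nlinarith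
  have d4t : 0 < (K - 1) * t - K := by nlinarith
  have hs2' : 0 ≤ s - 2 := by linarith
  simp only
  rw [← hsa, ← htb]
  have heq : ∀ u : ℝ, 0 < u - 1 → 0 < (K + 1) * u - K → 0 < K ^ 2 - u ^ 2 →
      0 < (K - 1) * u - K →
      2 / π * ((u ^ 2) ^ 2 / (u - 1)) * (u - 2) /
        ((K ^ 2 - u ^ 2) * ((K - 1) * u - K) * ((K + 1) * u - K)) =
      2 / π * ((u ^ 2 / (u - 1)) * (u ^ 2 / ((K + 1) * u - K)) *
        (K ^ 2 - u ^ 2)⁻¹ * ((u - 2) / ((K - 1) * u - K))) := by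
    intro u h1 h2 h3 h4'
    field_simp
  have hsqa : Real.sqrt (s ^ 2) = s := Real.sqrt_sq (by linarith)
  have hsqb : Real.sqrt (t ^ 2) = t := Real.sqrt_sq (by linarith)
  rw [hsqa, hsqb, heq s d1s d2s d3s d4s, heq t d1t d2t d3t d4t]
  apply mul_lt_mul_of_pos_left _ hpi
  -- factor inequalities
  have hstst : s + t < s * t := by nlinarith
  have h1 : s ^ 2 / (s - 1) < t ^ 2 / (t - 1) := by
    rw [div_lt_div_iff₀ d1s d1t]
    nlinarith [mul_pos (sub_pos.mpr hst) (show (0:ℝ) < s * t - s - t by linarith)]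
  have h2 : s ^ 2 / ((K + 1) * s - K) < t ^ 2 / ((K + 1) * t - K) := by
    rw [div_lt_div_iff₀ d2s d2t]
    nlinarith [mul_pos (sub_pos.mpr hst)
      (show (0:ℝ) < (K + 1) * (s * t) - K * (s + t) by nlinarith)]
  have h3 : (K ^ 2 - s ^ 2)⁻¹ < (K ^ 2 - t ^ 2)⁻¹ := by
    apply inv_strictAnti₀ d3t
    nlinarith
  have h4' : (s - 2) / ((K - 1) * s - K) < (t - 2) / ((K - 1) * t - K) := by
    rw [div_lt_div_iff₀ d4s d4t]
    nlinarith [mul_pos (sub_pos.mpr hst) (show (0:ℝ) < K - 2 by linarith)]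
  have p1s : 0 < s ^ 2 / (s - 1) := by positivity
  have p2s : 0 < s ^ 2 / ((K + 1) * s - K) := by positivity
  have p3s : 0 < (K ^ 2 - s ^ 2)⁻¹ := by positivity
  have p4s : 0 ≤ (s - 2) / ((K - 1) * s - K) := by positivity
  have h12 : s ^ 2 / (s - 1) * (s ^ 2 / ((K + 1) * s - K)) <
      t ^ 2 / (t - 1) * (t ^ 2 / ((K + 1) * t - K)) :=
    mul_lt_mul'' h1 h2 (le_of_lt p1s) (le_of_lt p2s)
  have h123 : s ^ 2 / (s - 1) * (s ^ 2 / ((K + 1) * s - K)) * (K ^ 2 - s ^ 2)⁻¹ <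
      t ^ 2 / (t - 1) * (t ^ 2 / ((K + 1) * t - K)) * (K ^ 2 - t ^ 2)⁻¹ :=
    mul_lt_mul'' h12 h3 (by positivity) (le_of_lt p3s)
  exact mul_lt_mul'' h123 h4' (by positivity) p4s
end

section
/- Let X be a real Hilbert space, {φₙ}_{n∈ℕ} a complete orthonormal sequence in X, and {fₙ} ⊂ X a sequence such that Λ := (∑_{n∈ℕ} ‖fₙ − φₙ‖²)^{1/2} < 1. Then for every finitely supported family of real numbers {aₙ}, ‖∑ₙ aₙ(fₙ − φₙ)‖ ≤ Λ·‖∑ₙ aₙφₙ‖; consequently {fₙ} is a Riesz basis of X, i.e., the image of the orthonormal basis {φₙ} under a bounded linear bijection of X with bounded inverse. -/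
open scoped RealInnerProductSpace

private lemma key_cs {X : Type*} [NormedAddCommGroup X] [InnerProductSpace ℝ X]
    (g : ℕ → X) (hsum : Summable (fun n => ‖g n‖ ^ 2))
    (s : Finset ℕ) (a : ℕ → ℝ) :
    ∑ n ∈ s, |a n| * ‖g n‖ ≤
      Real.sqrt (∑ n ∈ s, a n ^ 2) * Real.sqrt (∑' n, ‖g n‖ ^ 2) := by
  have h1 : (∑ n ∈ s, |a n| * ‖g n‖) ^ 2 ≤
      (∑ n ∈ s, a n ^ 2) * (∑ n ∈ s, ‖g n‖ ^ 2) := by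
    have := Finset.sum_mul_sq_le_sq_mul_sq s (fun n => |a n|) (fun n => ‖g n‖)
    simpa [sq_abs] using this
  have h2 : (∑ n ∈ s, ‖g n‖ ^ 2) ≤ ∑' n, ‖g n‖ ^ 2 :=
    Summable.sum_le_tsum s (fun n _ => by positivity) hsum
  have h3 : (∑ n ∈ s, |a n| * ‖g n‖) ^ 2 ≤
      (∑ n ∈ s, a n ^ 2) * (∑' n, ‖g n‖ ^ 2) :=
    h1.trans (by
      apply mul_le_mul_of_nonneg_left h2
      positivity)
  have hnn : 0 ≤ ∑ n ∈ s, |a n| * ‖g n‖ := by positivity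
  calc ∑ n ∈ s, |a n| * ‖g n‖ = Real.sqrt ((∑ n ∈ s, |a n| * ‖g n‖) ^ 2) := by
        rw [Real.sqrt_sq hnn]
    _ ≤ Real.sqrt ((∑ n ∈ s, a n ^ 2) * (∑' n, ‖g n‖ ^ 2)) := Real.sqrt_le_sqrt h3
    _ = _ := Real.sqrt_mul (by positivity) _

theorem stmt16 {X : Type*} [NormedAddCommGroup X] [InnerProductSpace ℝ X] [CompleteSpace X]
    (φ : HilbertBasis ℕ ℝ X) (f : ℕ → X)
    (hsum : Summable (fun n => ‖f n - φ n‖ ^ 2))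
    (hΛ : Real.sqrt (∑' n, ‖f n - φ n‖ ^ 2) < 1) :
    (∀ a : ℕ →₀ ℝ,
        ‖∑ n ∈ a.support, a n • (f n - φ n)‖ ≤
          Real.sqrt (∑' n, ‖f n - φ n‖ ^ 2) * ‖∑ n ∈ a.support, a n • (φ n : X)‖) ∧
    ∃ T : X ≃L[ℝ] X, ∀ n, f n = T (φ n) := by
  classical
  set g : ℕ → X := fun n => f n - φ n with hg
  set Λ : ℝ := Real.sqrt (∑' n, ‖g n‖ ^ 2) with hΛdef
  have hΛ0 : 0 ≤ Λ := Real.sqrt_nonneg _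
  have hortho := φ.orthonormal
  -- norm of finite combinations of φ
  have hnormφ : ∀ (s : Finset ℕ) (a : ℕ → ℝ),
      ‖∑ n ∈ s, a n • (φ n : X)‖ = Real.sqrt (∑ n ∈ s, a n ^ 2) := by
    intro s a
    have h := hortho.inner_sum a a s
    rw [real_inner_self_eq_norm_sq] at h
    simp only [starRingEnd_apply, star_trivial, ← sq] at h
    rw [← h, Real.sqrt_sq (norm_nonneg _)]
  -- the finset inequality
  have hfin : ∀ (s : Finset ℕ) (a : ℕ → ℝ),
      ‖∑ n ∈ s, a n • g n‖ ≤ Λ * ‖∑ n ∈ s, a n • (φ n : X)‖ := by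
    intro s a
    calc ‖∑ n ∈ s, a n • g n‖ ≤ ∑ n ∈ s, ‖a n • g n‖ := norm_sum_le _ _
      _ = ∑ n ∈ s, |a n| * ‖g n‖ := by simp [norm_smul, Real.norm_eq_abs]
      _ ≤ Real.sqrt (∑ n ∈ s, a n ^ 2) * Λ := key_cs g hsum s a
      _ = Λ * ‖∑ n ∈ s, a n • (φ n : X)‖ := by rw [hnormφ s a, mul_comm]
  refine ⟨fun a => hfin a.support a, ?_⟩
  -- summability and bound for the operator
  have hBessel : ∀ (x : X) (s : Finset ℕ), (∑ n ∈ s, (⟪φ n, x⟫) ^ 2) ≤ ‖x‖ ^ 2 := by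
    intro x s
    have := hortho.sum_inner_products_le (s := s) x
    simpa [Real.norm_eq_abs, sq_abs] using this
  have hbound : ∀ (x : X) (s : Finset ℕ),
      ∑ n ∈ s, ‖(⟪φ n, x⟫ : ℝ) • g n‖ ≤ Λ * ‖x‖ := by
    intro x s
    calc ∑ n ∈ s, ‖(⟪φ n, x⟫ : ℝ) • g n‖ = ∑ n ∈ s, |⟪φ n, x⟫| * ‖g n‖ := by
          simp [norm_smul, Real.norm_eq_abs]
      _ ≤ Real.sqrt (∑ n ∈ s, (⟪φ n, x⟫) ^ 2) * Λ := key_cs g hsum s _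
      _ ≤ Real.sqrt (‖x‖ ^ 2) * Λ :=
          mul_le_mul_of_nonneg_right (Real.sqrt_le_sqrt (hBessel x s)) hΛ0
      _ = ‖x‖ * Λ := by rw [Real.sqrt_sq (norm_nonneg _)]
      _ = Λ * ‖x‖ := mul_comm _ _
  have hsummable_norm : ∀ x : X, Summable (fun n => ‖(⟪φ n, x⟫ : ℝ) • g n‖) := by
    intro x
    exact summable_of_sum_le (fun n => norm_nonneg _) (hbound x)
  have hsummable : ∀ x : X, Summable (fun n => (⟪φ n, x⟫ : ℝ) • g n) :=
    fun x => (hsummable_norm x).of_norm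
  have htsum_bound : ∀ x : X, ‖∑' n, (⟪φ n, x⟫ : ℝ) • g n‖ ≤ Λ * ‖x‖ := by
    intro x
    calc ‖∑' n, (⟪φ n, x⟫ : ℝ) • g n‖ ≤ ∑' n, ‖(⟪φ n, x⟫ : ℝ) • g n‖ :=
          norm_tsum_le_tsum_norm (hsummable_norm x)
      _ ≤ Λ * ‖x‖ := Summable.tsum_le_of_sum_le (hsummable_norm x) (hbound x)
  -- the perturbation operator
  let Dlin : X →ₗ[ℝ] X :=
    { toFun := fun x => ∑' n, (⟪φ n, x⟫ : ℝ) • g n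
      map_add' := by
        intro x y
        rw [← Summable.tsum_add (hsummable x) (hsummable y)]
        exact tsum_congr fun n => by rw [inner_add_right, add_smul]
      map_smul' := by
        intro c x
        simp only [RingHom.id_apply]
        rw [← Summable.tsum_const_smul c (hsummable x)]
        exact tsum_congr fun n => by rw [real_inner_smul_right, mul_smul] }
  let D : X →L[ℝ] X := Dlin.mkContinuous Λ htsum_bound
  have hDnorm : ‖D‖ ≤ Λ := Dlin.mkContinuous_norm_le hΛ0 htsum_bound
  have hDlt : ‖-D‖ < 1 := by rw [norm_neg]; exact lt_of_le_of_lt hDnorm hΛ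
  let u : (X →L[ℝ] X)ˣ := Units.oneSub (-D) hDlt
  refine ⟨ContinuousLinearEquiv.unitsEquiv ℝ X u, fun n => ?_⟩
  have hDφ : D (φ n) = g n := by
    show (∑' m, (⟪φ m, (φ n : X)⟫ : ℝ) • g m) = g n
    rw [tsum_eq_single n]
    · rw [orthonormal_iff_ite.mp hortho n n]
      simp
    · intro m hm
      rw [orthonormal_iff_ite.mp hortho m n]
      simp [hm]
  rw [ContinuousLinearEquiv.unitsEquiv_apply]
  show f n = (u : X →L[ℝ] X) (φ n)
  have h1 : (u : X →L[ℝ] X) = 1 - (-D) := rfl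
  rw [h1, sub_neg_eq_add, ContinuousLinearMap.add_apply, ContinuousLinearMap.one_apply, hDφ]
  simp only [hg]
  abel
end

section
/- Let X be a real Hilbert space, {φₙ} an orthonormal basis, {Tₖ}_{k∈ℕ} bounded linear operators on X with ‖Tₖ‖ ≤ tₖ, and {C_{n,k}} real constants with |C_{n,k}| ≤ cₖ for all n, where Λ := ∑_{k=1}^∞ cₖ·tₖ < ∞. If fₙ = φₙ + ∑_{k=1}^∞ C_{n,k}·Tₖφₙ for every n, then for any finitely supported real family {aₙ}: ‖∑ₙ aₙ(fₙ − φₙ)‖ ≤ Λ·‖∑ₙ aₙφₙ‖. -/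
theorem stmt17 {X : Type*} [NormedAddCommGroup X] [InnerProductSpace ℝ X] [CompleteSpace X]
    (φ : HilbertBasis ℕ ℝ X) (f : ℕ → X)
    (T : ℕ → X →L[ℝ] X) (t c : ℕ → ℝ) (C : ℕ → ℕ → ℝ)
    (hT : ∀ k, ‖T k‖ ≤ t k) (hC : ∀ n k, |C n k| ≤ c k)
    (hct : Summable (fun k => c k * t k))
    (hf : ∀ n, f n = φ n + ∑' k, C n k • T k (φ n)) :
    ∀ a : ℕ →₀ ℝ,
      ‖∑ n ∈ a.support, a n • (f n - φ n)‖ ≤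
        (∑' k, c k * t k) * ‖∑ n ∈ a.support, a n • (φ n : X)‖ := by
  intro a
  classical
  set s := a.support with hs
  have hφ : Orthonormal ℝ (⇑φ) := φ.orthonormal
  have hc0 : ∀ k, 0 ≤ c k := fun k => (abs_nonneg _).trans (hC 0 k)
  have ht0 : ∀ k, 0 ≤ t k := fun k => (norm_nonneg _).trans (hT k)
  have hφn : ∀ n, ‖(φ n : X)‖ = 1 := fun n => hφ.1 n
  have hnorm : ∀ (b : ℕ → ℝ), ‖∑ n ∈ s, b n • (φ n : X)‖ ^ 2 = ∑ n ∈ s, (b n) ^ 2 := by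
    intro b
    rw [← real_inner_self_eq_norm_sq, hφ.inner_sum]
    simp [sq]
  set v : X := ∑ n ∈ s, a n • (φ n : X) with hv
  set w : ℕ → X := fun k => ∑ n ∈ s, (a n * C n k) • (φ n : X) with hw
  have hwk : ∀ k, ‖w k‖ ≤ c k * ‖v‖ := by
    intro k
    have h1 : ‖w k‖ ^ 2 = ∑ n ∈ s, (a n * C n k) ^ 2 := hnorm _
    have h2 : ‖v‖ ^ 2 = ∑ n ∈ s, (a n) ^ 2 := hnorm _
    have h3 : ‖w k‖ ^ 2 ≤ (c k * ‖v‖) ^ 2 := by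
      rw [h1, mul_pow, h2, Finset.mul_sum]
      refine Finset.sum_le_sum fun n _ => ?_
      nlinarith [sq_abs (C n k), mul_self_le_mul_self (abs_nonneg (C n k)) (hC n k),
        sq_nonneg (a n), sq_nonneg (a n * C n k)]
    have hcv : 0 ≤ c k * ‖v‖ := mul_nonneg (hc0 k) (norm_nonneg _)
    nlinarith [norm_nonneg (w k)]
  have hbound : ∀ n k, ‖C n k • T k ((φ n : X))‖ ≤ c k * t k := by
    intro n k
    rw [norm_smul, Real.norm_eq_abs]
    have h4 : ‖T k (φ n : X)‖ ≤ t k := by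
      have := (T k).le_opNorm (φ n : X)
      rw [hφn n, mul_one] at this
      exact this.trans (hT k)
    exact mul_le_mul (hC n k) h4 (norm_nonneg _) (hc0 k)
  have hS : ∀ n, Summable (fun k => C n k • T k ((φ n : X))) := fun n =>
    Summable.of_norm (Summable.of_nonneg_of_le (fun k => norm_nonneg _) (hbound n) hct)
  have hS' : ∀ n, Summable (fun k => (a n * C n k) • T k ((φ n : X))) := by
    intro n
    have := (hS n).const_smul (a n)
    simpa [smul_smul] using this
  have key : ∑ n ∈ s, a n • (f n - φ n) = ∑' k, T k (w k) := by
    have step1 : ∀ n, a n • (f n - φ n) = ∑' k, (a n * C n k) • T k ((φ n : X)) := by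
      intro n
      rw [hf n, add_sub_cancel_left]
      rw [← ((hS n).hasSum.const_smul (a n)).tsum_eq]
      simp [smul_smul]
    calc ∑ n ∈ s, a n • (f n - φ n)
        = ∑ n ∈ s, ∑' k, (a n * C n k) • T k ((φ n : X)) :=
          Finset.sum_congr rfl fun n _ => step1 n
      _ = ∑' k, ∑ n ∈ s, (a n * C n k) • T k ((φ n : X)) :=
          (Summable.tsum_finsetSum (fun n _ => hS' n)).symm
      _ = ∑' k, T k (w k) := tsum_congr fun k => by simp [hw, map_sum, map_smul]
  rw [key]
  have hTw : ∀ k, ‖T k (w k)‖ ≤ c k * t k * ‖v‖ := by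
    intro k
    have h5 : ‖T k (w k)‖ ≤ ‖T k‖ * ‖w k‖ := (T k).le_opNorm _
    have h6 : ‖T k‖ * ‖w k‖ ≤ t k * (c k * ‖v‖) :=
      mul_le_mul (hT k) (hwk k) (norm_nonneg _) (ht0 k)
    calc ‖T k (w k)‖ ≤ t k * (c k * ‖v‖) := h5.trans h6
      _ = c k * t k * ‖v‖ := by ring
  have hsum2 : Summable (fun k => c k * t k * ‖v‖) := hct.mul_right _
  have hsumn : Summable (fun k => ‖T k (w k)‖) :=
    Summable.of_nonneg_of_le (fun k => norm_nonneg _) hTw hsum2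
  calc ‖∑' k, T k (w k)‖ ≤ ∑' k, ‖T k (w k)‖ := norm_tsum_le_tsum_norm hsumn
    _ ≤ ∑' k, c k * t k * ‖v‖ := Summable.tsum_le_tsum hTw hsumn hsum2
    _ = (∑' k, c k * t k) * ‖v‖ := tsum_mul_right
end
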